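/- In any QBD+-star-model ⟨W, *, D, V⟩ (where * is an involution on W), for all sentences A, B and all worlds w: I(w, ∼(A→B)) = 1 iff I(w, ¬∼A ∧ ∼B) = 1, where ¬C abbreviates C→⊥. That is, the de Morgan axiom for implication (Ax19) is valid in the star semantics. -/
import Mathlib


inductive Fm : Type where
  | atom : Nat → Fm
  | bot : Fm
  | snot : Fm → Fm
  | and : Fm → Fm → Fm
  | or : Fm → Fm → Fm
  | imp : Fm → Fm → Fm
deriving DecidableEq

/-- Intuitionistic/Boolean negation `¬A := A → ⊥`. -/
def negFm (A : Fm) : Fm := Fm.imp A Fm.bot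

/-- Biconditional `A ↔ B := (A→B) ∧ (B→A)`. -/
def iffFm (A B : Fm) : Fm := Fm.and (Fm.imp A B) (Fm.imp B A)

structure StarModel where
  W : Type
  star : W → W
  invol : ∀ w, star (star w) = w
  V : W → Nat → Bool

/-- Star-semantics evaluation: `sv M A w = true` iff `I(w, A) = 1`. -/
def sv (M : StarModel) : Fm → M.W → Bool
  | .atom n, w => M.V w n
  | .bot, _ => false
  | .snot A, w => !(sv M A (M.star w))
  | .and A B, w => sv M A w && sv M B w
  | .or A B, w => sv M A w || sv M B w
  | .imp A B, w => !(sv M A w) || sv M B w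

/-- In any BD+-star-model, the de Morgan law for implication (Ax19) is valid:
`∼(A→B)` is true at `w` iff `¬∼A ∧ ∼B` is true at `w`, where `¬C := C → ⊥`. -/
theorem ax19_valid_in_star_models (M : StarModel) (w : M.W) (A B : Fm) :
    sv M (Fm.snot (Fm.imp A B)) w = true ↔
    sv M (Fm.and (negFm (Fm.snot A)) (Fm.snot B)) w = true := by
  simp [sv, negFm]
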